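/- arXiv:1606.05490 — 3 statements merged into one kernel-verified Lean document; each statement's English description precedes it below -/
import Mathlib

section
/- Let (P,T) be an algebraic Petri net structure, G an abelian group, E a homogeneous P-equation given by a simple P-vector k, and t ∈ T a transition. If k ⊙ tᐃ = 0 (i.e., k is a place invariant for t), then E is t-stable: for every step m →(t,σ) m', if k ⊙ m = 0 then k ⊙ m' = 0. -/
/-- First-order terms over natural-number variables and a signature `(I, ar)`. -/
inductive Tm (I : Type*) (ar : I → ℕ) : Type _
  | var : ℕ → Tm I ar
  | app : (i : I) → (Fin (ar i) → Tm I ar) → Tm I ar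

/-- Application of a substitution to a term. -/
def substT {I : Type*} {ar : I → ℕ} (σ : ℕ → Tm I ar) : Tm I ar → Tm I ar
  | .var x => σ x
  | .app i args => .app i (fun j => substT σ (args j))

/-- Term product: substitute every variable occurrence of ϱ by θ. -/
def termProd {I : Type*} {ar : I → ℕ} (ϱ θ : Tm I ar) : Tm I ar :=
  substT (fun _ => θ) ϱ

/-- A term is ground if it contains no variables. -/
inductive IsGround {I : Type*} {ar : I → ℕ} : Tm I ar → Prop
  | app : ∀ (i : I) (args : Fin (ar i) → Tm I ar),
      (∀ j, IsGround (args j)) → IsGround (.app i args)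

/-- An assignment maps every variable to a ground term. -/
def IsAssignment {I : Type*} {ar : I → ℕ} (σ : ℕ → Tm I ar) : Prop :=
  ∀ x, IsGround (σ x)

/-- A marking: finitely many tokens per place, all of them ground terms. -/
def IsMarking {P I : Type*} {ar : I → ℕ} (m : P → Tm I ar → ℕ) : Prop :=
  ∀ p, (Function.support (m p)).Finite ∧ ∀ θ, m p θ ≠ 0 → IsGround θ

/-- The pairing k ⊙ v of a simple P-vector k (coefficients γ, terms κ) over an abelian
group G with an integer P-vector v, via the term product. -/
noncomputable def pairZ {P I G : Type*} {ar : I → ℕ} [Fintype P] [AddCommGroup G]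
    (γ : P → G) (κ : P → Tm I ar) (v : P → Tm I ar → ℤ) : Tm I ar → G :=
  fun ω => ∑ p, ∑ᶠ θ ∈ {θ | termProd (κ p) θ = ω}, v p θ • γ p

/-- The pairing k ⊙ m with a marking m. -/
noncomputable def pairN {P I G : Type*} {ar : I → ℕ} [Fintype P] [AddCommGroup G]
    (γ : P → G) (κ : P → Tm I ar) (m : P → Tm I ar → ℕ) : Tm I ar → G :=
  pairZ γ κ (fun p θ => (m p θ : ℤ))

/-- Instantiation [v]σ of a semi-positive P-vector under an assignment σ. -/
noncomputable def instN {P I : Type*} {ar : I → ℕ} (σ : ℕ → Tm I ar) (v : P → Tm I ar → ℕ) :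
    P → Tm I ar → ℕ :=
  fun p θ => ∑ᶠ θ' ∈ {θ' | substT σ θ' = θ}, v p θ'

/-- A semi-positive simple P-vector: each component is a monomial with finite
(at most singleton) support. -/
def IsSimpleVec {P I : Type*} {ar : I → ℕ} (v : P → Tm I ar → ℕ) : Prop :=
  ∀ p, (Function.support (v p)).Subsingleton

/-- A step m →(t,σ) m' of the transition t = (pre, post): σ is an assignment, m and m'
are markings, m ≥ [pre]σ and m' = m − [pre]σ + [post]σ. -/
def IsStep {P I : Type*} {ar : I → ℕ} (pre post : P → Tm I ar → ℕ)
    (σ : ℕ → Tm I ar) (m m' : P → Tm I ar → ℕ) : Prop :=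
  IsAssignment σ ∧ IsMarking m ∧ IsMarking m' ∧
    (∀ p θ, instN σ pre p θ ≤ m p θ) ∧
    (∀ p θ, (m' p θ : ℤ) =
      (m p θ : ℤ) - (instN σ pre p θ : ℤ) + (instN σ post p θ : ℤ))

/-- The effect tᐃ = −t⁻ + t⁺ of a transition. -/
def effect {P I : Type*} {ar : I → ℕ} (pre post : P → Tm I ar → ℕ) :
    P → Tm I ar → ℤ :=
  fun p θ => (post p θ : ℤ) - (pre p θ : ℤ)

/-- Instantiation [v]σ of an integer P-vector under an assignment σ. -/
noncomputable def instZ {P I : Type*} {ar : I → ℕ} (σ : ℕ → Tm I ar) (v : P → Tm I ar → ℤ) :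
    P → Tm I ar → ℤ :=
  fun p θ => ∑ᶠ θ' ∈ {θ' | substT σ θ' = θ}, v p θ'

section Helpers

open Function Set
open scoped Classical

lemma finsum_mem_ifeq {α M : Type*} [AddCommMonoid M] (S : Set α) (ϱ : α) (c : M) :
    (∑ᶠ θ ∈ S, if θ = ϱ then c else 0) = if ϱ ∈ S then c else 0 := by
  classical
  by_cases hS : ϱ ∈ S
  · rw [if_pos hS]
    have h : S ∩ Function.support (fun θ => if θ = ϱ then c else 0)
        = ↑({ϱ} : Finset α) ∩ Function.support (fun θ => if θ = ϱ then c else 0) := by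
      ext x
      simp only [Set.mem_inter_iff, Function.mem_support, ne_eq, Finset.coe_singleton,
        Set.mem_singleton_iff]
      constructor
      · rintro ⟨-, h⟩
        refine ⟨?_, h⟩
        by_contra hx
        simp [hx] at h
      · rintro ⟨rfl, h⟩
        exact ⟨hS, h⟩
    rw [finsum_mem_eq_sum_of_inter_support_eq _ h, Finset.sum_singleton, if_pos rfl]
  · rw [if_neg hS]
    apply finsum_mem_of_eqOn_zero
    intro x hx
    have : x ≠ ϱ := fun h => hS (h ▸ hx)
    simp [this]

lemma support_ifeq_finite {α M : Type*} [Zero M] (S : Set α) (ϱ : α) (c : M) :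
    (S ∩ Function.support (fun θ => if θ = ϱ then c else 0)).Finite := by
  classical
  apply Set.Finite.subset (Set.finite_singleton ϱ)
  rintro x ⟨-, hx⟩
  simp only [Function.mem_support, ne_eq] at hx
  by_contra h
  simp only [Set.mem_singleton_iff] at h
  simp [h] at hx

lemma finsum_mem_two_ifeq {α G : Type*} [AddCommMonoid G] (S : Set α) (ϱ₁ ϱ₂ : α)
    (c₁ c₂ : G) :
    (∑ᶠ θ ∈ S, ((if θ = ϱ₁ then c₁ else 0) + (if θ = ϱ₂ then c₂ else 0)))
      = (if ϱ₁ ∈ S then c₁ else 0) + (if ϱ₂ ∈ S then c₂ else 0) := by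
  rw [finsum_mem_add_distrib' (support_ifeq_finite S ϱ₁ c₁) (support_ifeq_finite S ϱ₂ c₂),
    finsum_mem_ifeq, finsum_mem_ifeq]

lemma support_two_ifeq_finite {α G : Type*} [AddCommMonoid G] (S : Set α) (ϱ₁ ϱ₂ : α)
    (c₁ c₂ : G) :
    (S ∩ Function.support
      (fun θ => (if θ = ϱ₁ then c₁ else 0) + (if θ = ϱ₂ then c₂ else 0))).Finite := by
  classical
  apply Set.Finite.subset ((Set.finite_singleton ϱ₂).insert ϱ₁)
  rintro x ⟨-, hx⟩
  simp only [Function.mem_support, ne_eq] at hx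
  by_contra h
  simp only [Set.mem_insert_iff, Set.mem_singleton_iff, not_or] at h
  simp [h.1, h.2] at hx

lemma exists_repr {I : Type*} {ar : I → ℕ} (w : Tm I ar → ℕ)
    (hw : (Function.support w).Subsingleton) :
    ∃ ϱ, ∀ θ, w θ = if θ = ϱ then w ϱ else 0 := by
  classical
  by_cases h : ∃ θ, w θ ≠ 0
  · obtain ⟨ϱ, hϱ⟩ := h
    refine ⟨ϱ, fun θ => ?_⟩
    by_cases hθ : θ = ϱ
    · simp [hθ]
    · rw [if_neg hθ]
      by_contra hne
      exact hθ (hw hne hϱ)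
  · push_neg at h
    exact ⟨Tm.var 0, fun θ => by simp [h]⟩

lemma substT_substT {I : Type*} {ar : I → ℕ} (σ τ : ℕ → Tm I ar) (t : Tm I ar) :
    substT σ (substT τ t) = substT (fun x => substT σ (τ x)) t := by
  induction t with
  | var x => rfl
  | app i args ih =>
      simp only [substT]
      exact congrArg _ (funext fun j => ih j)

lemma termProd_substT {I : Type*} {ar : I → ℕ} (σ : ℕ → Tm I ar) (ϱ θ : Tm I ar) :
    termProd ϱ (substT σ θ) = substT σ (termProd ϱ θ) := by
  unfold termProd
  rw [substT_substT]

lemma instN_ifeq {P I : Type*} {ar : I → ℕ} (σ : ℕ → Tm I ar) (v : P → Tm I ar → ℕ)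
    (p : P) (ϱ : Tm I ar) (hv : ∀ θ, v p θ = if θ = ϱ then v p ϱ else 0) (θ : Tm I ar) :
    instN σ v p θ = if θ = substT σ ϱ then v p ϱ else 0 := by
  classical
  unfold instN
  calc (∑ᶠ θ' ∈ {θ' | substT σ θ' = θ}, v p θ')
      = ∑ᶠ θ' ∈ {θ' | substT σ θ' = θ}, (if θ' = ϱ then v p ϱ else 0) :=
        finsum_mem_congr rfl fun x _ => hv x
    _ = if ϱ ∈ {θ' | substT σ θ' = θ} then v p ϱ else 0 := finsum_mem_ifeq _ _ _
    _ = if θ = substT σ ϱ then v p ϱ else 0 := by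
        simp only [Set.mem_setOf_eq]
        by_cases h : substT σ ϱ = θ
        · rw [if_pos h, if_pos h.symm]
        · rw [if_neg h, if_neg (fun hc => h hc.symm)]

end Helpers

/-- Place-invariant theorem: if k ⊙ tᐃ = 0 then the homogeneous equation given by the
simple P-vector k is t-stable. -/
theorem stmt11 {P I G : Type*} {ar : I → ℕ} [Fintype P] [AddCommGroup G]
    (γ : P → G) (κ : P → Tm I ar)
    (pre post : P → Tm I ar → ℕ)
    (hsimple : IsSimpleVec pre ∧ IsSimpleVec post)
    (hinv : pairZ γ κ (effect pre post) = 0) :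
    ∀ (σ : ℕ → Tm I ar) (m m' : P → Tm I ar → ℕ),
      IsStep pre post σ m m' → pairN γ κ m = 0 → pairN γ κ m' = 0 := by
  classical
  obtain ⟨hpre, hpost⟩ := hsimple
  choose ϱpre hϱpre using fun p => exists_repr (pre p) (hpre p)
  choose ϱpost hϱpost using fun p => exists_repr (post p) (hpost p)
  -- the invariant condition, componentwise
  have heff : ∀ ω' : Tm I ar,
      (∑ p, ((if termProd (κ p) (ϱpost p) = ω' then (post p (ϱpost p) : ℤ) • γ p else 0)
        + (if termProd (κ p) (ϱpre p) = ω' then -((pre p (ϱpre p) : ℤ) • γ p) else 0))) = 0 := by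
    intro ω'
    have h0 := congrFun hinv ω'
    simp only [pairZ, effect, Pi.zero_apply] at h0
    refine Eq.trans ?_ h0
    refine Finset.sum_congr rfl fun p _ => ?_
    have hsum : ∀ θ : Tm I ar, ((post p θ : ℤ) - (pre p θ : ℤ)) • γ p
        = (if θ = ϱpost p then (post p (ϱpost p) : ℤ) • γ p else 0)
          + (if θ = ϱpre p then -((pre p (ϱpre p) : ℤ) • γ p) else 0) := by
      intro θ
      rw [hϱpre p θ, hϱpost p θ]
      push_cast
      split_ifs <;> (try simp [add_smul, sub_smul, sub_eq_add_neg, mul_smul, natCast_zsmul]) <;>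
        try abel
    calc (if termProd (κ p) (ϱpost p) = ω' then (post p (ϱpost p) : ℤ) • γ p else 0)
          + (if termProd (κ p) (ϱpre p) = ω' then -((pre p (ϱpre p) : ℤ) • γ p) else 0)
        = (if ϱpost p ∈ {θ | termProd (κ p) θ = ω'} then (post p (ϱpost p) : ℤ) • γ p else 0)
          + (if ϱpre p ∈ {θ | termProd (κ p) θ = ω'}
              then -((pre p (ϱpre p) : ℤ) • γ p) else 0) := by
          simp only [Set.mem_setOf_eq]
      _ = ∑ᶠ θ ∈ {θ | termProd (κ p) θ = ω'},
            ((if θ = ϱpost p then (post p (ϱpost p) : ℤ) • γ p else 0)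
              + (if θ = ϱpre p then -((pre p (ϱpre p) : ℤ) • γ p) else 0)) :=
          (finsum_mem_two_ifeq _ _ _ _ _).symm
      _ = ∑ᶠ θ ∈ {θ | termProd (κ p) θ = ω'}, ((post p θ : ℤ) - (pre p θ : ℤ)) • γ p :=
          finsum_mem_congr rfl fun θ _ => (hsum θ).symm
  intro σ m m' hstep hm0
  obtain ⟨hσ, hm, hm', hle, hdiff⟩ := hstep
  -- instantiations of pre and post are single monomials
  have hinstpre : ∀ p θ, instN σ pre p θ
      = if θ = substT σ (ϱpre p) then pre p (ϱpre p) else 0 :=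
    fun p => instN_ifeq σ pre p (ϱpre p) (hϱpre p)
  have hinstpost : ∀ p θ, instN σ post p θ
      = if θ = substT σ (ϱpost p) then post p (ϱpost p) else 0 :=
    fun p => instN_ifeq σ post p (ϱpost p) (hϱpost p)
  -- key decomposition of the pairing with m'
  have key : ∀ ω : Tm I ar, pairN γ κ m' ω = pairN γ κ m ω
      + ∑ p, ((if substT σ (termProd (κ p) (ϱpost p)) = ω
            then (post p (ϱpost p) : ℤ) • γ p else 0)
        + (if substT σ (termProd (κ p) (ϱpre p)) = ω
            then -((pre p (ϱpre p) : ℤ) • γ p) else 0)) := by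
    intro ω
    simp only [pairN, pairZ]
    rw [← Finset.sum_add_distrib]
    refine Finset.sum_congr rfl fun p _ => ?_
    have hpt : ∀ θ : Tm I ar, ((m' p θ : ℤ)) • γ p = ((m p θ : ℤ)) • γ p
        + ((if θ = substT σ (ϱpost p) then (post p (ϱpost p) : ℤ) • γ p else 0)
          + (if θ = substT σ (ϱpre p) then -((pre p (ϱpre p) : ℤ) • γ p) else 0)) := by
      intro θ
      rw [hdiff p θ, hinstpre p θ, hinstpost p θ]
      push_cast
      split_ifs <;> (try simp [add_smul, sub_smul, sub_eq_add_neg, mul_smul, natCast_zsmul]) <;>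
        try abel
    have hfm : ({θ | termProd (κ p) θ = ω}
        ∩ Function.support (fun θ => ((m p θ : ℤ)) • γ p)).Finite := by
      apply Set.Finite.subset (hm p).1
      rintro x ⟨-, hx⟩
      simp only [Function.mem_support, ne_eq] at hx ⊢
      intro h0
      simp [h0] at hx
    calc (∑ᶠ θ ∈ {θ | termProd (κ p) θ = ω}, ((m' p θ : ℤ)) • γ p)
        = ∑ᶠ θ ∈ {θ | termProd (κ p) θ = ω}, (((m p θ : ℤ)) • γ p
            + ((if θ = substT σ (ϱpost p) then (post p (ϱpost p) : ℤ) • γ p else 0)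
              + (if θ = substT σ (ϱpre p) then -((pre p (ϱpre p) : ℤ) • γ p) else 0))) :=
          finsum_mem_congr rfl fun θ _ => hpt θ
      _ = (∑ᶠ θ ∈ {θ | termProd (κ p) θ = ω}, ((m p θ : ℤ)) • γ p)
          + ∑ᶠ θ ∈ {θ | termProd (κ p) θ = ω},
              ((if θ = substT σ (ϱpost p) then (post p (ϱpost p) : ℤ) • γ p else 0)
                + (if θ = substT σ (ϱpre p) then -((pre p (ϱpre p) : ℤ) • γ p) else 0)) :=
          finsum_mem_add_distrib' hfm (support_two_ifeq_finite _ _ _ _ _)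
      _ = (∑ᶠ θ ∈ {θ | termProd (κ p) θ = ω}, ((m p θ : ℤ)) • γ p)
          + ((if substT σ (termProd (κ p) (ϱpost p)) = ω
                then (post p (ϱpost p) : ℤ) • γ p else 0)
            + (if substT σ (termProd (κ p) (ϱpre p)) = ω
                then -((pre p (ϱpre p) : ℤ) • γ p) else 0)) := by
          rw [finsum_mem_two_ifeq]
          simp only [Set.mem_setOf_eq, termProd_substT]
  -- the correction term vanishes thanks to the invariant
  have hD : ∀ ω : Tm I ar,
      (∑ p, ((if substT σ (termProd (κ p) (ϱpost p)) = ω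
            then (post p (ϱpost p) : ℤ) • γ p else 0)
        + (if substT σ (termProd (κ p) (ϱpre p)) = ω
            then -((pre p (ϱpre p) : ℤ) • γ p) else 0))) = 0 := by
    intro ω
    set uP : P → Tm I ar := fun p => termProd (κ p) (ϱpost p) with huP
    set uN : P → Tm I ar := fun p => termProd (κ p) (ϱpre p) with huN
    set Om : Finset (Tm I ar) :=
      Finset.image uP Finset.univ ∪ Finset.image uN Finset.univ with hOm
    set F : Finset (Tm I ar) := Om.filter (fun ω' => substT σ ω' = ω) with hF
    have hswap : ∀ (gp : Tm I ar) (c : G), gp ∈ Om →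
        (if substT σ gp = ω then c else 0) = ∑ ω' ∈ F, if gp = ω' then c else 0 := by
      intro gp c hgp
      rw [Finset.sum_ite_eq F gp (fun _ => c)]
      simp only [hF, Finset.mem_filter]
      by_cases h : substT σ gp = ω
      · simp [h, hgp]
      · simp [h]
    have hmemP : ∀ p, uP p ∈ Om := fun p =>
      Finset.mem_union_left _ (Finset.mem_image_of_mem _ (Finset.mem_univ p))
    have hmemN : ∀ p, uN p ∈ Om := fun p =>
      Finset.mem_union_right _ (Finset.mem_image_of_mem _ (Finset.mem_univ p))
    calc (∑ p, ((if substT σ (uP p) = ω then (post p (ϱpost p) : ℤ) • γ p else 0)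
          + (if substT σ (uN p) = ω then -((pre p (ϱpre p) : ℤ) • γ p) else 0)))
        = ∑ p, ∑ ω' ∈ F, ((if uP p = ω' then (post p (ϱpost p) : ℤ) • γ p else 0)
            + (if uN p = ω' then -((pre p (ϱpre p) : ℤ) • γ p) else 0)) := by
          refine Finset.sum_congr rfl fun p _ => ?_
          rw [hswap _ _ (hmemP p), hswap _ _ (hmemN p), ← Finset.sum_add_distrib]
      _ = ∑ ω' ∈ F, ∑ p, ((if uP p = ω' then (post p (ϱpost p) : ℤ) • γ p else 0)
            + (if uN p = ω' then -((pre p (ϱpre p) : ℤ) • γ p) else 0)) := Finset.sum_comm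
      _ = 0 := Finset.sum_eq_zero fun ω' _ => heff ω'
  funext ω
  rw [key ω, hD ω, add_zero, hm0]
end

section
/- Let P be a finite set and γ : P → ℤ. The set of all ν : P → ℕ with ∑_{p∈P} ν(p)·γ(p) = 0 is a submonoid of (ℕ^P, +) generated by its finite subset of elements ν with ∑_{p∈P} ν(p) ≤ 2·|P|·γ̄·γ̲ (when γ is mixed, with γ̄ = max positive value of γ and γ̲ = max absolute value of negative values of γ): every such ν is a finite sum of solutions each bounded by 2·|P|·γ̄·γ̲ in total size. -/
open Finset

section StmtAux

variable {P : Type*} [Fintype P]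

open scoped Classical

/-- negative of the weighted sum of the remaining multiset. -/
def sgAux (γ : P → ℤ) (r : P → ℕ) : ℤ := -∑ p, (r p : ℤ) * γ p

/-- condition on which element to remove next. -/
def condAux (γ : P → ℤ) (r : P → ℕ) (p : P) : Prop :=
  0 < r p ∧ (0 < sgAux γ r → γ p ≤ 0) ∧ (sgAux γ r < 0 → 0 ≤ γ p)

noncomputable def nxtAux (γ : P → ℤ) (r : P → ℕ) : P → ℕ :=
  if h : ∃ p, condAux γ r p
  then Function.update r h.choose (r h.choose - 1)
  else r

lemma exists_condAux (γ : P → ℤ) (r : P → ℕ) (h : 0 < ∑ p, r p) :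
    ∃ p, condAux γ r p := by
  rcases lt_trichotomy (sgAux γ r) 0 with hs | hs | hs
  · have h1 : 0 < ∑ p, (r p : ℤ) * γ p := by unfold sgAux at hs; linarith
    obtain ⟨p, -, hp⟩ := Finset.exists_lt_of_sum_lt (f := fun _ : P => (0:ℤ))
      (g := fun p => (r p : ℤ) * γ p) (by simpa using h1)
    have hr : 0 < r p := by
      rcases Nat.eq_zero_or_pos (r p) with h0 | h0
      · simp [h0] at hp
      · exact h0
    have hγ : 0 < γ p := by nlinarith [Int.natCast_nonneg (r p)]
    exact ⟨p, hr, fun h' => absurd h' (by linarith), fun _ => le_of_lt hγ⟩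
  · obtain ⟨p, -, hp⟩ := Finset.exists_lt_of_sum_lt (f := fun _ : P => (0:ℕ))
      (g := r) (by simpa using h)
    exact ⟨p, hp, fun h' => absurd h' (by rw [hs]; exact lt_irrefl 0),
      fun h' => absurd h' (by rw [hs]; exact lt_irrefl 0)⟩
  · have h1 : ∑ p, (r p : ℤ) * γ p < 0 := by unfold sgAux at hs; linarith
    obtain ⟨p, -, hp⟩ := Finset.exists_lt_of_sum_lt (f := fun p => (r p : ℤ) * γ p)
      (g := fun _ : P => (0:ℤ)) (by simpa using h1)
    have hr : 0 < r p := by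
      rcases Nat.eq_zero_or_pos (r p) with h0 | h0
      · simp [h0] at hp
      · exact h0
    have hγ : γ p < 0 := by nlinarith [Int.natCast_nonneg (r p)]
    exact ⟨p, hr, fun _ => le_of_lt hγ, fun h' => absurd h' (by linarith)⟩

lemma nxtAux_spec (γ : P → ℤ) (r : P → ℕ) (h : 0 < ∑ p, r p) :
    ∃ q, condAux γ r q ∧ nxtAux γ r = Function.update r q (r q - 1) := by
  classical
  have he := exists_condAux γ r h
  exact ⟨he.choose, he.choose_spec, by rw [nxtAux, dif_pos he]⟩

lemma nxtAux_le (γ : P → ℤ) (r : P → ℕ) (p : P) : nxtAux γ r p ≤ r p := by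
  classical
  unfold nxtAux
  split
  · rename_i h
    rcases eq_or_ne p h.choose with rfl | hne
    · simp only [Function.update_self]
      omega
    · simp [Function.update_of_ne hne]
  · exact le_rfl

lemma iter_nxtAux_le (γ : P → ℤ) (r : P → ℕ) (j : ℕ) (p : P) :
    (nxtAux γ)^[j] r p ≤ r p := by
  induction j generalizing r with
  | zero => simp
  | succ n ih =>
    rw [Function.iterate_succ_apply]
    exact le_trans (ih (nxtAux γ r)) (nxtAux_le γ r p)

lemma sum_update_sub (r : P → ℕ) (q : P) (hq : 0 < r q) :
    ∑ p, Function.update r q (r q - 1) p + 1 = ∑ p, r p := by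
  classical
  rw [Finset.sum_update_of_mem (Finset.mem_univ q),
      Finset.sum_eq_sum_sdiff_singleton_add (Finset.mem_univ q) r]
  omega

lemma wsum_update_sub (γ : P → ℤ) (r : P → ℕ) (q : P) (hq : 0 < r q) :
    ∑ p, (Function.update r q (r q - 1) p : ℤ) * γ p
      = (∑ p, (r p : ℤ) * γ p) - γ q := by
  classical
  have key : ∀ x ∈ Finset.univ \ {q},
      (Function.update r q (r q - 1) x : ℤ) * γ x = (r x : ℤ) * γ x := by
    intro x hx
    rw [Function.update_of_ne (by simpa using (Finset.mem_sdiff.mp hx).2)]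
  rw [Finset.sum_eq_sum_sdiff_singleton_add (Finset.mem_univ q)
        (fun p => (Function.update r q (r q - 1) p : ℤ) * γ p),
      Finset.sum_eq_sum_sdiff_singleton_add (Finset.mem_univ q)
        (fun p => (r p : ℤ) * γ p),
      Finset.sum_congr rfl key]
  simp only [Function.update_self]
  have hc : ((r q - 1 : ℕ) : ℤ) = (r q : ℤ) - 1 := by
    have h1 : (1:ℕ) ≤ r q := hq
    push_cast [Nat.cast_sub h1]
    ring
  rw [hc]; ring


lemma inv_nxtAux (γ : P → ℤ) (γbar γund : ℤ)
    (hb : ∀ p, γ p ≤ γbar) (hu : ∀ p, -γund ≤ γ p)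
    (ν : P → ℕ) (hν : ∑ p, (ν p : ℤ) * γ p = 0)
    (h1 : 1 ≤ γbar) (h2 : 1 ≤ γund) :
    ∀ k, k ≤ ∑ p, ν p →
      (∑ p, (nxtAux γ)^[k] ν p = ∑ p, ν p - k) ∧
      (-γund ≤ sgAux γ ((nxtAux γ)^[k] ν) ∧ sgAux γ ((nxtAux γ)^[k] ν) ≤ γbar) := by
  intro k
  induction k with
  | zero =>
    intro _
    refine ⟨by simp, ?_, ?_⟩ <;> simp [sgAux, hν] <;> linarith
  | succ n ih =>
    intro hk
    obtain ⟨hsum, hlo, hhi⟩ := ih (by omega)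
    have hpos : 0 < ∑ p, (nxtAux γ)^[n] ν p := by omega
    obtain ⟨q, ⟨hq0, hq1, hq2⟩, heq⟩ := nxtAux_spec γ ((nxtAux γ)^[n] ν) hpos
    rw [Function.iterate_succ_apply', heq]
    have hsum' := sum_update_sub ((nxtAux γ)^[n] ν) q hq0
    have hsg : sgAux γ (Function.update ((nxtAux γ)^[n] ν) q
        ((nxtAux γ)^[n] ν q - 1)) = sgAux γ ((nxtAux γ)^[n] ν) + γ q := by
      unfold sgAux
      rw [wsum_update_sub γ _ q hq0]
      ring
    refine ⟨by omega, ?_, ?_⟩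
    · rw [hsg]
      rcases lt_trichotomy (sgAux γ ((nxtAux γ)^[n] ν)) 0 with hs | hs | hs
      · have := hq2 hs; linarith
      · have := hu q; linarith
      · have := hu q; linarith
    · rw [hsg]
      rcases lt_trichotomy (sgAux γ ((nxtAux γ)^[n] ν)) 0 with hs | hs | hs
      · have := hb q; linarith
      · have := hb q; linarith
      · have := hq1 hs; linarith

lemma exists_subsolution (γ : P → ℤ) (γbar γund : ℤ)
    (hb : ∀ p, γ p ≤ γbar) (hu : ∀ p, -γund ≤ γ p)
    (h1 : 1 ≤ γbar) (h2 : 1 ≤ γund)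
    (ν : P → ℕ) (hν : ∑ p, (ν p : ℤ) * γ p = 0)
    (hS : γbar + γund + 2 ≤ (∑ p, ν p : ℕ)) :
    ∃ μ : P → ℕ, (∀ p, μ p ≤ ν p) ∧ 0 < ∑ p, μ p ∧ (∑ p, μ p) < ∑ p, ν p ∧
      ∑ p, (μ p : ℤ) * γ p = 0 := by
  classical
  set S := ∑ p, ν p with hSdef
  have hSpos : (γbar + γund + 2 : ℤ) ≤ (S : ℤ) := hS
  have hinv := inv_nxtAux γ γbar γund hb hu ν hν h1 h2
  -- pigeonhole on k ∈ Icc 1 S ↦ sgAux γ r_k ∈ Icc (-γund) γbar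
  have hcard1 : (Finset.Icc 1 S).card = S := by simp
  have hcard2 : ((Finset.Icc (-γund) γbar).card : ℤ) = γbar + γund + 1 := by
    rw [Int.card_Icc]
    rw [Int.toNat_of_nonneg (by linarith)]
    ring
  have hlt : (Finset.Icc (-γund) γbar).card < (Finset.Icc 1 S).card := by
    rw [hcard1]
    have : ((Finset.Icc (-γund) γbar).card : ℤ) < (S : ℤ) := by
      rw [hcard2]; linarith
    exact_mod_cast this
  have hmaps : ∀ k ∈ Finset.Icc 1 S,
      sgAux γ ((nxtAux γ)^[k] ν) ∈ Finset.Icc (-γund) γbar := by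
    intro k hk
    rw [Finset.mem_Icc] at hk ⊢
    exact (hinv k hk.2).2
  obtain ⟨k, hk, l, hl, hkl, hsame⟩ :=
    Finset.exists_ne_map_eq_of_card_lt_of_maps_to hlt hmaps
  rw [Finset.mem_Icc] at hk hl
  -- wlog k < l
  wlog hlt2 : k < l generalizing k l
  · exact this l hl k hk hkl.symm hsame.symm (by omega)
  have hmono : ∀ p, (nxtAux γ)^[l] ν p ≤ (nxtAux γ)^[k] ν p := by
    intro p
    have : (nxtAux γ)^[l] ν = (nxtAux γ)^[l - k] ((nxtAux γ)^[k] ν) := by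
      rw [← Function.iterate_add_apply]
      congr 1
      omega
    rw [this]
    exact iter_nxtAux_le γ _ _ p
  refine ⟨fun p => (nxtAux γ)^[k] ν p - (nxtAux γ)^[l] ν p, ?_, ?_, ?_, ?_⟩
  · intro p
    exact le_trans (Nat.sub_le _ _) (iter_nxtAux_le γ ν k p)
  · have hsk := (hinv k hk.2).1
    have hsl := (hinv l hl.2).1
    have : ∑ p, ((nxtAux γ)^[k] ν p - (nxtAux γ)^[l] ν p)
        = ∑ p, (nxtAux γ)^[k] ν p - ∑ p, (nxtAux γ)^[l] ν p := by
      rw [eq_tsub_iff_add_eq_of_le (Finset.sum_le_sum fun p _ => hmono p),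
        ← Finset.sum_add_distrib]
      exact Finset.sum_congr rfl fun p _ => by have := hmono p; omega
    rw [this, hsk, hsl]
    omega
  · have hsk := (hinv k hk.2).1
    have hsl := (hinv l hl.2).1
    have : ∑ p, ((nxtAux γ)^[k] ν p - (nxtAux γ)^[l] ν p)
        = ∑ p, (nxtAux γ)^[k] ν p - ∑ p, (nxtAux γ)^[l] ν p := by
      rw [eq_tsub_iff_add_eq_of_le (Finset.sum_le_sum fun p _ => hmono p),
        ← Finset.sum_add_distrib]
      exact Finset.sum_congr rfl fun p _ => by have := hmono p; omega
    rw [this, hsk, hsl]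
    have hgg : (γbar + γund + 2 : ℤ) ≤ (S:ℤ) := hSpos
    have : (2:ℤ) ≤ S := by linarith
    omega
  · have : ∑ p, (((nxtAux γ)^[k] ν p - (nxtAux γ)^[l] ν p : ℕ) : ℤ) * γ p
        = (∑ p, ((nxtAux γ)^[k] ν p : ℤ) * γ p)
          - ∑ p, ((nxtAux γ)^[l] ν p : ℤ) * γ p := by
      rw [← Finset.sum_sub_distrib]
      refine Finset.sum_congr rfl fun p _ => ?_
      rw [Nat.cast_sub (hmono p)]
      ring
    rw [this]
    have h0 : sgAux γ ((nxtAux γ)^[k] ν) = sgAux γ ((nxtAux γ)^[l] ν) := hsame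
    unfold sgAux at h0
    linarith

end StmtAux

/-- For mixed γ, every solution ν of ∑ ν(p)·γ(p) = 0 is a finite sum of solutions each
of total size at most 2·|P|·γ̄·γ̲; i.e. the solution monoid is generated by its
bounded elements. -/
theorem stmt14 {P : Type*} [Fintype P]
    (γ : P → ℤ)
    (hpos : ∃ p, 0 < γ p) (hneg : ∃ p, γ p < 0)
    (γbar γund : ℤ)
    (hbar : IsGreatest (Set.range γ) γbar)
    (hund : IsGreatest ((fun p => |γ p|) '' {p | γ p < 0}) γund)
    (ν : P → ℕ) (hν : ∑ p, (ν p : ℤ) * γ p = 0) :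
    ∃ (n : ℕ) (f : Fin n → P → ℕ),
      (∀ i, (∑ p, (f i p : ℤ) * γ p = 0) ∧
        (∑ p, (f i p : ℤ)) ≤ 2 * (Fintype.card P) * γbar * γund) ∧
      ν = ∑ i, f i := by
  classical
  obtain ⟨p₀, hp₀⟩ := hpos
  obtain ⟨q₀, hq₀⟩ := hneg
  have hb : ∀ p, γ p ≤ γbar := fun p => hbar.2 ⟨p, rfl⟩
  have h1 : 1 ≤ γbar := by have := hb p₀; omega
  have h2 : 1 ≤ γund := by
    obtain ⟨x, hx, hx2⟩ := hund.1
    have : γ x < 0 := hx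
    simp only at hx2
    rw [← hx2, abs_of_neg this]
    omega
  have hu : ∀ p, -γund ≤ γ p := by
    intro p
    rcases lt_or_ge (γ p) 0 with h | h
    · have := hund.2 ⟨p, h, rfl⟩
      simp only at this
      rw [abs_of_neg h] at this
      linarith
    · linarith
  have hpq : p₀ ≠ q₀ := by intro h; rw [h] at hp₀; omega
  have hcard : 2 ≤ (Fintype.card P : ℤ) := by
    have := Fintype.one_lt_card_iff.mpr ⟨p₀, q₀, hpq⟩
    omega
  set B : ℤ := 2 * (Fintype.card P) * γbar * γund with hBdef
  have hB : γbar + γund + 2 ≤ B := by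
    have t1 : 0 ≤ (γbar - 1) * (γund - 1) := mul_nonneg (by linarith) (by linarith)
    have t2 : 0 ≤ ((Fintype.card P : ℤ) - 2) * (γbar * γund) :=
      mul_nonneg (by linarith) (by nlinarith)
    nlinarith [t1, t2]
  suffices H : ∀ S : ℕ, ∀ ν : P → ℕ, ∑ p, ν p ≤ S → ∑ p, (ν p : ℤ) * γ p = 0 →
      ∃ (n : ℕ) (f : Fin n → P → ℕ),
        (∀ i, (∑ p, (f i p : ℤ) * γ p = 0) ∧ (∑ p, (f i p : ℤ)) ≤ B) ∧
        ν = ∑ i, f i by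
    exact H (∑ p, ν p) ν le_rfl hν
  have hsmall : ∀ ν : P → ℕ, ∑ p, (ν p : ℤ) * γ p = 0 → ((∑ p, ν p : ℕ) : ℤ) ≤ B →
      ∃ (n : ℕ) (f : Fin n → P → ℕ),
        (∀ i, (∑ p, (f i p : ℤ) * γ p = 0) ∧ (∑ p, (f i p : ℤ)) ≤ B) ∧
        ν = ∑ i, f i := by
    intro ν hν hνB
    refine ⟨1, fun _ => ν, fun i => ⟨hν, ?_⟩, by simp⟩
    calc ∑ p, (ν p : ℤ) = ((∑ p, ν p : ℕ) : ℤ) := by push_cast; ring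
      _ ≤ B := hνB
  intro S
  induction S with
  | zero =>
    intro ν hνS hν0
    refine hsmall ν hν0 ?_
    have : ∑ p, ν p = 0 := by omega
    rw [this]
    simp only [Nat.cast_zero]
    linarith
  | succ n ih =>
    intro ν hνS hν0
    rcases le_or_gt ((∑ p, ν p : ℕ) : ℤ) B with hle | hgt
    · exact hsmall ν hν0 hle
    · have hSS : γbar + γund + 2 ≤ ((∑ p, ν p : ℕ) : ℤ) := by linarith
      obtain ⟨μ, hμle, hμpos, hμlt, hμsol⟩ :=
        exists_subsolution γ γbar γund hb hu h1 h2 ν hν0 hSS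
      have hrest : ∑ p, ((ν p - μ p : ℕ) : ℤ) * γ p = 0 := by
        have : ∑ p, ((ν p - μ p : ℕ) : ℤ) * γ p
            = (∑ p, (ν p : ℤ) * γ p) - ∑ p, (μ p : ℤ) * γ p := by
          rw [← Finset.sum_sub_distrib]
          refine Finset.sum_congr rfl fun p _ => ?_
          rw [Nat.cast_sub (hμle p)]
          ring
        rw [this, hν0, hμsol]
        ring
      have hsumrest : ∑ p, (ν p - μ p) = ∑ p, ν p - ∑ p, μ p := by
        rw [eq_tsub_iff_add_eq_of_le (Finset.sum_le_sum fun p _ => hμle p),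
          ← Finset.sum_add_distrib]
        exact Finset.sum_congr rfl fun p _ => by have := hμle p; omega
      obtain ⟨n1, f1, hf1, hf1sum⟩ := ih μ (by omega) hμsol
      obtain ⟨n2, f2, hf2, hf2sum⟩ := ih (fun p => ν p - μ p) (by rw [hsumrest]; omega) hrest
      refine ⟨n1 + n2, Fin.append f1 f2, ?_, ?_⟩
      · intro i
        refine Fin.addCases (fun j => ?_) (fun j => ?_) i
        · simpa [Fin.append_left] using hf1 j
        · simpa [Fin.append_right] using hf2 j
      · rw [Fin.sum_univ_add]
        simp only [Fin.append_left, Fin.append_right]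
        rw [← hf1sum, ← hf2sum]
        funext p
        simp only [Pi.add_apply]
        have := hμle p
        omega
end

section
/- The halting problem for Minsky machines (two-counter/register machines with increment and test-and-decrement-or-jump instructions) reduces to validity of a homogeneous linear equation 'q_n = 0' in an algebraic Petri net over the signature {f/1, c/0}: the machine M halts from initial state (0,1) if and only if the equation q_n = 0 is not valid in the encoding net N_M; hence validity of homogeneous equations in algebraic Petri nets is undecidable. -/
/-- Terms over the signature {f/1, c/0} with natural-number variables. -/
inductive MTm : Type
  | c : MTm
  | f : MTm → MTm
  | var : ℕ → MTm
  deriving DecidableEq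

/-- Application of a substitution to a term. -/
def msubst (σ : ℕ → MTm) : MTm → MTm
  | .c => .c
  | .f t => .f (msubst σ t)
  | .var x => σ x

/-- Ground terms contain no variables. -/
def MGround : MTm → Prop
  | .c => True
  | .f t => MGround t
  | .var _ => False

/-- Instructions of a Minsky machine with R registers and n instruction addresses. -/
inductive Instr (R n : ℕ) : Type
  | inc (r : Fin R) (z : Fin n)
  | jz (r : Fin R) (z₁ z₂ : Fin n)
  | halt

/-- A Minsky machine: registers, an instruction sequence, and the final HALT. -/
structure Minsky where
  R : ℕ
  n : ℕ
  I : Fin (n + 1) → Instr R (n + 1)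
  hlast : I (Fin.last n) = .halt
  honly : ∀ i, i ≠ Fin.last n → I i ≠ .halt

/-- A step of the Minsky machine on states (register valuation, instruction counter). -/
def MinskyStep (M : Minsky) (s s' : (Fin M.R → ℕ) × Fin (M.n + 1)) : Prop :=
  (∃ r z, M.I s.2 = .inc r z ∧ s'.2 = z ∧
    s'.1 = Function.update s.1 r (s.1 r + 1)) ∨
  (∃ r z₁ z₂, M.I s.2 = .jz r z₁ z₂ ∧
    ((0 < s.1 r ∧ s'.2 = z₁ ∧ s'.1 = Function.update s.1 r (s.1 r - 1)) ∨
     (s.1 r = 0 ∧ s'.2 = z₂ ∧ s'.1 = s.1)))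

/-- M halts: from initial state (0, 1) some state at the HALT instruction is reachable. -/
def Halts (M : Minsky) : Prop :=
  ∃ ρ : Fin M.R → ℕ,
    Relation.ReflTransGen (MinskyStep M) (fun _ => 0, 0) (ρ, Fin.last M.n)

/-- Places of the encoding net N_M: register places p_r and control places q_i. -/
abbrev MPlace (M : Minsky) := Sum (Fin M.R) (Fin (M.n + 1))

/-- Markings / P-vectors of the net: a multiset of terms per place. -/
abbrev NVec (M : Minsky) := MPlace M → Multiset MTm

/-- Encoding of INC(r,z) at address i: consume c from q_i and X from p_r; produce c on
q_z and f(X) on p_r. -/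
def incT (M : Minsky) (i z : Fin (M.n + 1)) (r : Fin M.R) : NVec M × NVec M :=
  (fun pl => if pl = .inr i then {MTm.c} else if pl = .inl r then {MTm.var 0} else 0,
   fun pl => if pl = .inr z then {MTm.c} else if pl = .inl r then {MTm.f (MTm.var 0)} else 0)

/-- Encoding of JZ(r,z₁,z₂) at address i, positive branch: consume c from q_i and f(X)
from p_r; produce c on q_{z₁} and X on p_r. -/
def jzT₁ (M : Minsky) (i z₁ : Fin (M.n + 1)) (r : Fin M.R) : NVec M × NVec M :=
  (fun pl => if pl = .inr i then {MTm.c} else if pl = .inl r then {MTm.f (MTm.var 0)} else 0,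
   fun pl => if pl = .inr z₁ then {MTm.c} else if pl = .inl r then {MTm.var 0} else 0)

/-- Encoding of JZ(r,z₁,z₂) at address i, zero branch: consume c from q_i and c from
p_r; produce c on q_{z₂} and c back on p_r. -/
def jzT₂ (M : Minsky) (i z₂ : Fin (M.n + 1)) (r : Fin M.R) : NVec M × NVec M :=
  (fun pl => if pl = .inr i then {MTm.c} else if pl = .inl r then {MTm.c} else 0,
   fun pl => if pl = .inr z₂ then {MTm.c} else if pl = .inl r then {MTm.c} else 0)

/-- The transitions (pre, post) of the encoding net N_M. -/
def NetTrans (M : Minsky) : Set (NVec M × NVec M) :=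
  {T | ∃ i r z, M.I i = .inc r z ∧ T = incT M i z r} ∪
  {T | ∃ i r z₁ z₂, M.I i = .jz r z₁ z₂ ∧ (T = jzT₁ M i z₁ r ∨ T = jzT₂ M i z₂ r)}

/-- A step of the net N_M: fire some transition in a ground firing mode. -/
def NetStep (M : Minsky) (m m' : NVec M) : Prop :=
  ∃ T ∈ NetTrans M, ∃ σ : ℕ → MTm, (∀ x, MGround (σ x)) ∧
    (∀ pl, Multiset.map (msubst σ) (T.1 pl) ≤ m pl) ∧
    (∀ pl, m' pl = m pl - Multiset.map (msubst σ) (T.1 pl)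
      + Multiset.map (msubst σ) (T.2 pl))

/-- The initial marking encoding the Minsky state (0, 1): a token c on q_1 and the
term c (encoding register value 0) on every register place. -/
def m₀ (M : Minsky) : NVec M := fun pl =>
  match pl with
  | .inl _ => {MTm.c}
  | .inr i => if i = 0 then {MTm.c} else 0

/-- Validity of the homogeneous equation q_n = 0 in (N_M, m₀): the place q_n is empty
in every reachable marking. -/
def ValidQn (M : Minsky) : Prop :=
  ∀ m : NVec M, Relation.ReflTransGen (NetStep M) (m₀ M) m →
    m (.inr (Fin.last M.n)) = 0

/-- f^k(c). -/
def fpow : ℕ → MTm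
  | 0 => .c
  | k + 1 => .f (fpow k)

lemma fpow_ground : ∀ k, MGround (fpow k)
  | 0 => trivial
  | k + 1 => fpow_ground k

/-- Encoding of a Minsky state as a marking. -/
def enc (M : Minsky) (s : (Fin M.R → ℕ) × Fin (M.n + 1)) : NVec M := fun pl =>
  match pl with
  | .inl r => {fpow (s.1 r)}
  | .inr i => if i = s.2 then {MTm.c} else 0

lemma m₀_eq (M : Minsky) : m₀ M = enc M (fun _ => 0, 0) := by
  funext pl
  cases pl with
  | inl r => rfl
  | inr i => rfl

lemma singleton_le_single {a b : MTm} (h : ({a} : Multiset MTm) ≤ {b}) : a = b := by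
  have := Multiset.mem_singleton.mp (Multiset.singleton_le.mp h)
  exact this

lemma not_single_le_zero (a : MTm) : ¬ (({a} : Multiset MTm) ≤ 0) := by
  intro h
  simpa using Multiset.singleton_le.mp h

lemma map_if (σ : ℕ → MTm) (P : Prop) [Decidable P] :
    Multiset.map (msubst σ) (if P then ({MTm.c} : Multiset MTm) else 0)
      = if P then {MTm.c} else 0 := by
  split <;> simp [msubst]

lemma sim_fwd (M : Minsky) {s s'} (h : MinskyStep M s s') :
    NetStep M (enc M s) (enc M s') := by
  rcases h with ⟨r, z, hI, hz, hρ⟩ | ⟨r, z₁, z₂, hI, hcase⟩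
  · refine ⟨incT M s.2 z r, Or.inl ⟨s.2, r, z, hI, rfl⟩,
      fun _ => fpow (s.1 r), fun _ => fpow_ground _, ?_, ?_⟩
    · intro pl
      rcases pl with r' | j
      · by_cases hr : (Sum.inl r' : MPlace M) = .inl r
        · cases hr
          simp [incT, enc, msubst, map_if]
        · simp [incT, enc, hr]
      · by_cases hj : (Sum.inr j : MPlace M) = .inr s.2
        · cases hj
          simp [incT, enc, msubst, map_if]
        · simp [incT, enc, hj]
    · intro pl
      rcases pl with r' | j
      · by_cases hr : r' = r
        · subst hr
          simp [incT, enc, msubst, hρ, fpow]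
        · simp [incT, enc, hρ, Function.update_apply, hr, Sum.inl.injEq]
      · have h1 : enc M s' (.inr j) = if j = z then {MTm.c} else 0 := by
          simp [enc, hz]
        rw [h1]
        by_cases hj : j = s.2
        · subst hj
          simp [incT, enc, msubst, map_if]
        · simp [incT, enc, msubst, hj, Sum.inr.injEq, map_if]
  · rcases hcase with ⟨hpos, hz, hρ⟩ | ⟨hzero, hz, hρ⟩
    · -- positive branch, jzT₁
      obtain ⟨k, hk⟩ : ∃ k, s.1 r = k + 1 := ⟨s.1 r - 1, by omega⟩
      refine ⟨jzT₁ M s.2 z₁ r, Or.inr ⟨s.2, r, z₁, z₂, hI, Or.inl rfl⟩,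
        fun _ => fpow k, fun _ => fpow_ground _, ?_, ?_⟩
      · intro pl
        rcases pl with r' | j
        · by_cases hr : r' = r
          · subst hr
            simp [jzT₁, enc, msubst, hk, fpow]
          · simp [jzT₁, enc, hr, Sum.inl.injEq]
        · by_cases hj : j = s.2
          · subst hj
            simp [jzT₁, enc, msubst, map_if]
          · simp [jzT₁, enc, hj, Sum.inr.injEq, map_if]
      · intro pl
        rcases pl with r' | j
        · by_cases hr : r' = r
          · subst hr
            have h2 : s.1 r' - 1 = k := by omega
            simp [jzT₁, enc, msubst, hρ, hk, fpow, h2]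
          · simp [jzT₁, enc, hρ, Function.update_apply, hr, Sum.inl.injEq]
        · have h1 : enc M s' (.inr j) = if j = z₁ then {MTm.c} else 0 := by
            simp [enc, hz]
          rw [h1]
          by_cases hj : j = s.2
          · subst hj
            simp [jzT₁, enc, msubst, map_if]
          · simp [jzT₁, enc, msubst, hj, Sum.inr.injEq, map_if]
    · -- zero branch, jzT₂
      refine ⟨jzT₂ M s.2 z₂ r, Or.inr ⟨s.2, r, z₁, z₂, hI, Or.inr rfl⟩,
        fun _ => .c, fun _ => trivial, ?_, ?_⟩
      · intro pl
        rcases pl with r' | j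
        · by_cases hr : r' = r
          · subst hr
            simp [jzT₂, enc, msubst, hzero, fpow]
          · simp [jzT₂, enc, hr, Sum.inl.injEq]
        · by_cases hj : j = s.2
          · subst hj
            simp [jzT₂, enc, msubst, map_if]
          · simp [jzT₂, enc, hj, Sum.inr.injEq, map_if]
      · intro pl
        rcases pl with r' | j
        · by_cases hr : r' = r
          · subst hr
            simp [jzT₂, enc, msubst, hρ, hzero, fpow]
          · simp [jzT₂, enc, hρ, hr, Sum.inl.injEq]
        · have h1 : enc M s' (.inr j) = if j = z₂ then {MTm.c} else 0 := by
            simp [enc, hz]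
          rw [h1]
          by_cases hj : j = s.2
          · subst hj
            simp [jzT₂, enc, msubst, map_if]
          · simp [jzT₂, enc, msubst, hj, Sum.inr.injEq, map_if]

lemma sim_fwd_star (M : Minsky) {s s'}
    (h : Relation.ReflTransGen (MinskyStep M) s s') :
    Relation.ReflTransGen (NetStep M) (enc M s) (enc M s') := by
  induction h with
  | refl => exact .refl
  | tail _ hstep ih => exact ih.tail (sim_fwd M hstep)

lemma netstep_inv (M : Minsky) {s m'} (h : NetStep M (enc M s) m') :
    ∃ s', MinskyStep M s s' ∧ m' = enc M s' := by
  obtain ⟨T, hT, σ, hg, hpre, hpost⟩ := h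
  rcases hT with ⟨i, r, z, hI, rfl⟩ | ⟨i, r, z₁, z₂, hI, hT⟩
  · -- inc transition
    have hi : i = s.2 := by
      have := hpre (.inr i)
      simp only [incT, if_pos rfl, Multiset.map_singleton, msubst, enc] at this
      by_contra hne
      rw [if_neg hne] at this
      exact not_single_le_zero _ this
    subst hi
    have hσ : σ 0 = fpow (s.1 r) := by
      have := hpre (.inl r)
      simp only [incT, enc, reduceCtorEq, if_neg, if_pos rfl,
        Multiset.map_singleton, msubst] at this
      exact singleton_le_single this
    refine ⟨(Function.update s.1 r (s.1 r + 1), z),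
      Or.inl ⟨r, z, hI, rfl, rfl⟩, ?_⟩
    funext pl
    rw [hpost pl]
    rcases pl with r' | j
    · by_cases hr : r' = r
      · subst hr
        simp [incT, enc, msubst, hσ, fpow]
      · simp [incT, enc, Function.update_apply, hr, Sum.inl.injEq]
    · by_cases hj : j = s.2
      · subst hj
        by_cases hz : s.2 = z <;>
          simp [incT, enc, msubst, hz, Sum.inr.injEq, map_if]
      · by_cases hz : j = z <;>
          simp [incT, enc, msubst, hj, hz, Sum.inr.injEq, map_if]
  · rcases hT with rfl | rfl
    · -- jzT₁
      have hi : i = s.2 := by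
        have := hpre (.inr i)
        simp only [jzT₁, if_pos rfl, Multiset.map_singleton, msubst, enc] at this
        by_contra hne
        rw [if_neg hne] at this
        exact not_single_le_zero _ this
      subst hi
      have hσ : MTm.f (σ 0) = fpow (s.1 r) := by
        have := hpre (.inl r)
        simp only [jzT₁, enc, reduceCtorEq, if_neg, if_pos rfl,
          Multiset.map_singleton, msubst] at this
        exact singleton_le_single this
      obtain ⟨k, hk⟩ : ∃ k, s.1 r = k + 1 := by
        rcases hn : s.1 r with _ | k
        · rw [hn] at hσ; simp [fpow] at hσ
        · exact ⟨k, rfl⟩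
      have hσ0 : σ 0 = fpow k := by
        rw [hk] at hσ
        simpa [fpow] using hσ
      refine ⟨(Function.update s.1 r (s.1 r - 1), z₁),
        Or.inr ⟨r, z₁, z₂, hI, Or.inl ⟨by omega, rfl, rfl⟩⟩, ?_⟩
      funext pl
      rw [hpost pl]
      rcases pl with r' | j
      · by_cases hr : r' = r
        · subst hr
          have h2 : s.1 r' - 1 = k := by omega
          simp [jzT₁, enc, msubst, hσ0, hk, fpow, h2]
        · simp [jzT₁, enc, Function.update_apply, hr, Sum.inl.injEq]
      · by_cases hj : j = s.2
        · subst hj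
          by_cases hz : s.2 = z₁ <;>
            simp [jzT₁, enc, msubst, hz, Sum.inr.injEq, map_if]
        · by_cases hz : j = z₁ <;>
            simp [jzT₁, enc, msubst, hj, hz, Sum.inr.injEq, map_if]
    · -- jzT₂
      have hi : i = s.2 := by
        have := hpre (.inr i)
        simp only [jzT₂, if_pos rfl, Multiset.map_singleton, msubst, enc] at this
        by_contra hne
        rw [if_neg hne] at this
        exact not_single_le_zero _ this
      subst hi
      have hzero : s.1 r = 0 := by
        have h1 : ({MTm.c} : Multiset MTm) ≤ {fpow (s.1 r)} := by
          simpa [jzT₂, enc, msubst] using hpre (.inl r)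
        have h2 := singleton_le_single h1
        rcases hn : s.1 r with _ | k
        · rfl
        · rw [hn] at h2; simp [fpow] at h2
      refine ⟨(s.1, z₂), Or.inr ⟨r, z₁, z₂, hI, Or.inr ⟨hzero, rfl, rfl⟩⟩, ?_⟩
      funext pl
      rw [hpost pl]
      rcases pl with r' | j
      · by_cases hr : r' = r
        · subst hr
          simp [jzT₂, enc, msubst, hzero, fpow]
        · simp [jzT₂, enc, hr, Sum.inl.injEq]
      · by_cases hj : j = s.2
        · subst hj
          by_cases hz : s.2 = z₂ <;>
            simp [jzT₂, enc, msubst, hz, Sum.inr.injEq, map_if]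
        · by_cases hz : j = z₂ <;>
            simp [jzT₂, enc, msubst, hj, hz, Sum.inr.injEq, map_if]

lemma reach_inv (M : Minsky) {m} (h : Relation.ReflTransGen (NetStep M) (m₀ M) m) :
    ∃ s, Relation.ReflTransGen (MinskyStep M) (fun _ => 0, 0) s ∧ m = enc M s := by
  induction h with
  | refl => exact ⟨(fun _ => 0, 0), .refl, m₀_eq M⟩
  | tail _ hstep ih =>
    obtain ⟨s, hs, rfl⟩ := ih
    obtain ⟨s', hstep', rfl⟩ := netstep_inv M hstep
    exact ⟨s', hs.tail hstep', rfl⟩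

/-- Reduction of the Minsky halting problem: M halts iff the homogeneous equation
q_n = 0 is not valid in the encoding net N_M; hence validity of homogeneous equations
in algebraic Petri nets is undecidable. -/
theorem stmt19 (M : Minsky) : Halts M ↔ ¬ ValidQn M := by
  constructor
  · rintro ⟨ρ, hr⟩ hv
    have hreach : Relation.ReflTransGen (NetStep M) (m₀ M) (enc M (ρ, Fin.last M.n)) := by
      rw [m₀_eq M]
      exact sim_fwd_star M hr
    have := hv _ hreach
    simp [enc] at this
  · intro hv
    simp only [ValidQn, not_forall] at hv
    obtain ⟨m, hreach, hne⟩ := hv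
    obtain ⟨s, hs, rfl⟩ := reach_inv M hreach
    have hlast : s.2 = Fin.last M.n := by
      by_contra hne'
      apply hne
      have h3 : Fin.last M.n ≠ s.2 := Ne.symm hne'
      simp [enc, h3]
    refine ⟨s.1, ?_⟩
    have : s = (s.1, Fin.last M.n) := by
      cases s; simp_all
    rwa [this] at hs
end
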